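/- Let M be a von Neumann algebra without central summands of type I₁ and let L : M → M be an additive map satisfying L(AB + BA) = L(A)B + AL(B) + L(B)A + BL(A) whenever AB = 0 (the case ξ = −1). Then L is an additive Jordan derivation: L(A²) = L(A)A + AL(A) for all A ∈ M. -/

import Mathlib

variable {H : Type*} [NormedAddCommGroup H] [InnerProductSpace ℂ H] [CompleteSpace H]

/-- `Z` lies in the center of the von Neumann algebra `M`. -/
def VonNeumannAlgebra.IsCentral (M : VonNeumannAlgebra H) (Z : H →L[ℂ] H) : Prop :=
  Z ∈ M ∧ ∀ A ∈ M, Z * A = A * Z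

/-- `P` is a projection (self-adjoint idempotent) in `M`. -/
def VonNeumannAlgebra.IsProjection (M : VonNeumannAlgebra H) (P : H →L[ℂ] H) : Prop :=
  P ∈ M ∧ P * P = P ∧ star P = P

/-- `Q` is a central projection of `M`. -/
def VonNeumannAlgebra.IsCentralProjection (M : VonNeumannAlgebra H) (Q : H →L[ℂ] H) : Prop :=
  M.IsCentral Q ∧ Q * Q = Q ∧ star Q = Q

/-- The core of the projection `P` (the largest central projection below `P`) is zero,
i.e. the only central projection `Q` with `Q ≤ P` (equivalently `Q * P = Q`) is `0`. -/
def VonNeumannAlgebra.CoreZero (M : VonNeumannAlgebra H) (P : H →L[ℂ] H) : Prop :=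
  ∀ Q : H →L[ℂ] H, M.IsCentralProjection Q → Q * P = Q → Q = 0

/-- The central carrier of the projection `P` (the smallest central projection above `P`)
is `1`, i.e. the only central projection `Q` with `Q * P = P` is `1`. -/
def VonNeumannAlgebra.CarrierOne (M : VonNeumannAlgebra H) (P : H →L[ℂ] H) : Prop :=
  ∀ Q : H →L[ℂ] H, M.IsCentralProjection Q → Q * P = P → Q = 1

/-- `M` has no central summand of type I₁: equivalently, `M` contains a projection
with core `0` and central carrier `1`. -/
def VonNeumannAlgebra.NoTypeI1 (M : VonNeumannAlgebra H) : Prop :=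
  ∃ P : H →L[ℂ] H, M.IsProjection P ∧ M.CoreZero P ∧ M.CarrierOne P

/-
Write `D(a, b) = L(ab + ba) - (L(a)b + aL(b) + L(b)a + bL(a))`. It is biadditive and symmetric,
vanishes whenever `ab = 0`, and `D(a, a) = 2(L(a²) - L(a)a - aL(a))`; so it suffices to show
`D = 0`. Pick a projection `p ∈ M` with core `0` and central carrier `1`; then `1 - p` also has
central carrier `1`. A projection `e` with central carrier `1` is faithful (`aMe = 0` or `eMa = 0`
forces `a = 0`), because the projection onto the closed span of `MeH` is central and dominates
`e`. Splitting `a` and `b` along the Peirce decomposition `M = ⊕ eMf` (`e, f ∈ {p, 1 - p}`),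
the only pieces of `D(a, b)` not killed by a zero product are `D(eMe, eMe)` and `D(eMf, fMe)`.
The first is handled by testing against `eM(1 - e)` and using faithfulness of `1 - e`; the
second by `L(1) = 0` and the zero product `(f + b)(a - ba) = 0` for `a ∈ eMf`, `b ∈ fMe`.
-/

open MulOpposite

instance MulOpposite.instIsAddTorsionFree {R : Type*} [AddMonoid R] [IsAddTorsionFree R] :
    IsAddTorsionFree Rᵐᵒᵖ :=
  unop_injective.isAddTorsionFree (opAddEquiv.symm : Rᵐᵒᵖ ≃+ R).toAddMonoidHom

section Peirce

variable {R : Type*} [Ring R] {p : R}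

def peirceIdempotent (p : R) (i : Bool) : R := cond i p (1 - p)

@[simp] lemma peirceIdempotent_true (p : R) : peirceIdempotent p true = p := rfl

@[simp] lemma peirceIdempotent_false (p : R) : peirceIdempotent p false = 1 - p := rfl

lemma sum_peirceIdempotent_mul_mul_peirceIdempotent (p x : R) :
    ∑ i, ∑ j, peirceIdempotent p i * x * peirceIdempotent p j = x := by
  have hsum : ∑ i, peirceIdempotent p i = 1 := by simp
  rw [← Finset.sum_mul_sum, ← Finset.sum_mul, hsum, one_mul, mul_one]

lemma isIdempotentElem_peirceIdempotent (hp : IsIdempotentElem p) (i : Bool) :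
    IsIdempotentElem (peirceIdempotent p i) := by
  cases i
  exacts [hp.one_sub, hp]

lemma peirceIdempotent_mul_of_ne (hp : IsIdempotentElem p) {i j : Bool} (h : i ≠ j) :
    peirceIdempotent p i * peirceIdempotent p j = 0 := by
  cases i <;> cases j
  exacts [absurd rfl h, hp.one_sub_mul_self, hp.mul_one_sub_self, absurd rfl h]

lemma peirceIdempotent_mul_mul_of_ne (hp : IsIdempotentElem p) {i j : Bool} (h : i ≠ j)
    (z : R) : peirceIdempotent p i * (peirceIdempotent p j * z) = 0 := by
  rw [← mul_assoc, peirceIdempotent_mul_of_ne hp h, zero_mul]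

end Peirce

section JordanDefect

variable {R : Type*} [Ring R]

def IsJordanDerivableAtZero (L : R →+ R) : Prop :=
  ∀ a b : R, a * b = 0 → L (a * b + b * a) = L a * b + a * L b + L b * a + b * L a

def jordanDefect (L : R →+ R) : R →+ R →+ R :=
  .mk' (fun a ↦ .mk' (fun b ↦ L (a * b + b * a) - (L a * b + a * L b + L b * a + b * L a))
      fun b c ↦ by simp only [mul_add, add_mul, map_add]; abel)
    fun a b ↦ by
      ext c
      simp only [AddMonoidHom.mk'_apply, AddMonoidHom.add_apply, mul_add, add_mul, map_add]
      abel

variable {L : R →+ R}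

lemma jordanDefect_apply (a b : R) :
    jordanDefect L a b = L (a * b + b * a) - (L a * b + a * L b + L b * a + b * L a) := rfl

lemma jordanDefect_comm (a b : R) : jordanDefect L a b = jordanDefect L b a := by
  rw [jordanDefect_apply, jordanDefect_apply, add_comm (b * a)]; abel

lemma jordanDefect_mulOp (a b : R) :
    jordanDefect (AddMonoidHom.mulOp L) (op a) (op b) = op (jordanDefect L a b) := by
  simp only [jordanDefect_apply, AddMonoidHom.mulOp_apply_apply, Function.comp_apply, unop_add,
    unop_mul, unop_op, op_sub, op_add, op_mul, add_comm (b * a)]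
  abel

lemma isJordanDerivableAtZero_iff :
    IsJordanDerivableAtZero L ↔ ∀ a b : R, a * b = 0 → jordanDefect L a b = 0 := by
  simp only [IsJordanDerivableAtZero, jordanDefect_apply, sub_eq_zero]

namespace IsJordanDerivableAtZero

lemma jordanDefect_eq_zero (hL : IsJordanDerivableAtZero L) {a b : R} (h : a * b = 0) :
    jordanDefect L a b = 0 :=
  isJordanDerivableAtZero_iff.1 hL a b h

lemma mulOp (hL : IsJordanDerivableAtZero L) :
    IsJordanDerivableAtZero (AddMonoidHom.mulOp L) := by
  refine isJordanDerivableAtZero_iff.2 fun a b h ↦ ?_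
  rw [← op_unop a, ← op_unop b, jordanDefect_mulOp, jordanDefect_comm,
    hL.jordanDefect_eq_zero (by simpa using congrArg unop h), op_zero]

lemma mul_jordanDefect_add_jordanDefect_mul (hL : IsJordanDerivableAtZero L) {a b x : R}
    (hxa : x * a = 0) (hxb : x * b = 0) :
    x * jordanDefect L a b + jordanDefect L a b * x =
      2 * (b * L x * a + a * L x * b + b * x * L a + a * x * L b) := by
  have hxab : x * (a * b) = 0 := by rw [← mul_assoc, hxa, zero_mul]
  have hxba : x * (b * a) = 0 := by rw [← mul_assoc, hxb, zero_mul]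
  have hbxa : b * x * a = 0 := by rw [mul_assoc, hxa, mul_zero]
  have haxb : a * x * b = 0 := by rw [mul_assoc, hxb, mul_zero]
  have h1 := hL x (a * b) hxab
  rw [hxab, zero_add] at h1
  have h2 := hL x b hxb
  rw [hxb, zero_add] at h2
  have h3 := hL (b * x) a hbxa
  rw [hbxa, zero_add, ← mul_assoc, h2] at h3
  have h1' := hL x (b * a) hxba
  rw [hxba, zero_add] at h1'
  have h2' := hL x a hxa
  rw [hxa, zero_add] at h2'
  have h3' := hL (a * x) b haxb
  rw [haxb, zero_add, ← mul_assoc, h2'] at h3'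
  rw [jordanDefect_apply, map_add]
  linear_combination (norm := noncomm_ring) h3 - h1 + h3' - h1'
    + L b * hxa + L a * hxb - hxa * L b - hxb * L a

lemma mul_map_mul_eq_zero [IsAddTorsionFree R] (hL : IsJordanDerivableAtZero L) {q c : R}
    (hq : IsIdempotentElem q) (hcq : c * q = 0) (hqc : q * c = 0) : q * L c * q = 0 := by
  have h := hL c q hcq
  rw [hcq, hqc, add_zero, map_zero] at h
  rw [← nsmul_right_inj two_ne_zero, nsmul_zero, two_nsmul]
  linear_combination (norm := noncomm_ring) -(q * h * q) - q * L c * hq.eq - hq.eq * L c * q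
    - hqc * L q * q - q * L q * hcq

lemma mul_jordanDefect_mul_eq_zero [IsAddTorsionFree R] (hL : IsJordanDerivableAtZero L)
    {q a b : R} (hq : IsIdempotentElem q) (haq : a * q = 0) (hqa : q * a = 0) (hbq : b * q = 0)
    (hqb : q * b = 0) : q * jordanDefect L a b * q = 0 := by
  have h := hL.mul_map_mul_eq_zero hq (c := a * b + b * a)
    (by rw [add_mul, mul_assoc, mul_assoc, hbq, haq, mul_zero, mul_zero, add_zero])
    (by rw [mul_add, ← mul_assoc, ← mul_assoc, hqa, hqb, zero_mul, zero_mul, add_zero])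
  rw [jordanDefect_apply]
  linear_combination (norm := noncomm_ring) h - q * L a * hbq - hqa * L b * q
    - q * L b * haq - hqb * L a * q

lemma jordanDefect_mul_one_sub_eq_zero [IsAddTorsionFree R] (hL : IsJordanDerivableAtZero L)
    {q a b : R} (hq : IsIdempotentElem q) (hfaith : ∀ c : R, (∀ x, c * x * q = 0) → c = 0)
    (haq : a * q = 0) (hqa : q * a = 0) (hbq : b * q = 0) (hqb : q * b = 0) :
    jordanDefect L a b * (1 - q) = 0 := by
  have hqTq := hL.mul_jordanDefect_mul_eq_zero hq haq hqa hbq hqb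
  have hqLaq := hL.mul_map_mul_eq_zero hq haq hqa
  have hqLbq := hL.mul_map_mul_eq_zero hq hbq hqb
  refine hfaith _ fun y ↦ ?_
  have hxa : (1 - q) * y * q * a = 0 := by simp only [mul_assoc, hqa, mul_zero]
  have hxb : (1 - q) * y * q * b = 0 := by simp only [mul_assoc, hqb, mul_zero]
  have h := hL.mul_jordanDefect_add_jordanDefect_mul hxa hxb
  linear_combination (norm := noncomm_ring) h * q - (1 - q) * y * hqTq
    - jordanDefect L a b * (1 - q) * y * hq.eq
    + 2 * (b * L ((1 - q) * y * q) * haq + a * L ((1 - q) * y * q) * hbq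
      + b * (1 - q) * y * hqLaq + a * (1 - q) * y * hqLbq)

lemma jordanDefect_eq_zero_in_corner [IsAddTorsionFree R] (hL : IsJordanDerivableAtZero L)
    {q a b : R} (hq : IsIdempotentElem q) (hfaith : ∀ c : R, (∀ x, c * x * q = 0) → c = 0)
    (hfaith' : ∀ c : R, (∀ x, q * x * c = 0) → c = 0)
    (haq : a * q = 0) (hqa : q * a = 0) (hbq : b * q = 0) (hqb : q * b = 0) :
    jordanDefect L a b = 0 := by
  have hright := hL.jordanDefect_mul_one_sub_eq_zero hq hfaith haq hqa hbq hqb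
  have hleft : (1 - q) * jordanDefect L a b = 0 := by
    have h := hL.mulOp.jordanDefect_mul_one_sub_eq_zero (q := op q) (a := op a) (b := op b)
      (by rw [IsIdempotentElem, ← op_mul, hq.eq])
      (fun c hc ↦ unop_injective <| hfaith' _ fun x ↦ by
        simpa [mul_assoc] using congrArg unop (hc (op x)))
      (by rw [← op_mul, hqa, op_zero]) (by rw [← op_mul, haq, op_zero])
      (by rw [← op_mul, hqb, op_zero]) (by rw [← op_mul, hbq, op_zero])
    rw [jordanDefect_mulOp] at h
    simpa using congrArg unop h
  have hqTq := hL.mul_jordanDefect_mul_eq_zero hq haq hqa hbq hqb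
  linear_combination (norm := noncomm_ring) hleft + q * hright + hqTq

lemma map_one_eq_zero [IsAddTorsionFree R] (hL : IsJordanDerivableAtZero L) {p : R}
    (hp : IsIdempotentElem p) (hpp : jordanDefect L p p = 0)
    (hqq : jordanDefect L (1 - p) (1 - p) = 0) : L 1 = 0 := by
  have h : jordanDefect L 1 1 = 0 := by
    rw [show (1 : R) = p + (1 - p) by abel]
    simp only [map_add, AddMonoidHom.add_apply, hpp, hqq,
      hL.jordanDefect_eq_zero hp.mul_one_sub_self, hL.jordanDefect_eq_zero hp.one_sub_mul_self,
      add_zero]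
  rw [jordanDefect_apply, mul_one, map_add] at h
  rw [← nsmul_right_inj two_ne_zero, nsmul_zero, two_nsmul]
  linear_combination (norm := noncomm_ring) -h

lemma jordanDefect_eq_zero_off_corner (hL : IsJordanDerivableAtZero L) (hL1 : L 1 = 0)
    {p a b : R} (hpa : p * a = a) (hap : a * p = 0) (hpb : p * b = 0) (hbp : b * p = b) :
    jordanDefect L a b = 0 := by
  have hbb : b * b = 0 := by linear_combination (norm := noncomm_ring) b * hpb - hbp * b
  have hqa : (1 - p) * a = 0 := by rw [sub_mul, one_mul, hpa, sub_self]
  have haq : a * (1 - p) = a := by rw [mul_sub, mul_one, hap, sub_zero]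
  have h1 := hL (1 - p) a hqa
  rw [hqa, zero_add, haq] at h1
  have hbba : b * (b * a) = 0 := by rw [← mul_assoc, hbb, zero_mul]
  have h2 := hL b (b * a) hbba
  rw [hbba, zero_add] at h2
  have hbap : b * a * p = 0 := by rw [mul_assoc, hap, mul_zero]
  have hpba : p * (b * a) = 0 := by rw [← mul_assoc, hpb, zero_mul]
  have h3 := hL (b * a) p hbap
  rw [hbap, hpba, add_zero, map_zero] at h3
  have hprod : (1 - p + b) * (a - b * a) = 0 := by
    linear_combination (norm := noncomm_ring) hqa + hpb * a - hbba
  have h4 := hL (1 - p + b) (a - b * a) hprod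
  have harg : (1 - p + b) * (a - b * a) + (a - b * a) * (1 - p + b) =
      a + a * b - (b * a + b * a * b) := by
    linear_combination (norm := noncomm_ring) hprod + haq + b * hap
  rw [harg] at h4
  simp only [map_add, map_sub, hL1] at h1 h4
  rw [jordanDefect_apply, map_add]
  linear_combination (norm := noncomm_ring) h4 - h1 + h2 - h3

lemma jordanDefect_peirceIdempotent_eq_zero [IsAddTorsionFree R]
    (hL : IsJordanDerivableAtZero L) {p : R} (hp : IsIdempotentElem p)
    (hfaithR : ∀ i, ∀ c : R, (∀ x, c * x * peirceIdempotent p i = 0) → c = 0)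
    (hfaithL : ∀ i, ∀ c : R, (∀ x, peirceIdempotent p i * x * c = 0) → c = 0)
    (i j k l : Bool) (x y : R) :
    jordanDefect L (peirceIdempotent p i * x * peirceIdempotent p j)
      (peirceIdempotent p k * y * peirceIdempotent p l) = 0 := by
  have hdiag : ∀ m u v, jordanDefect L (peirceIdempotent p m * u * peirceIdempotent p m)
      (peirceIdempotent p m * v * peirceIdempotent p m) = 0 := fun m u v ↦ by
    refine hL.jordanDefect_eq_zero_in_corner (isIdempotentElem_peirceIdempotent hp !m)
      (hfaithR !m) (hfaithL !m) ?_ ?_ ?_ ?_ <;>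
    simp only [mul_assoc, peirceIdempotent_mul_of_ne hp (Bool.self_ne_not m),
      peirceIdempotent_mul_mul_of_ne hp (Bool.not_ne_self m), mul_zero]
  have hL1 : L 1 = 0 := by
    refine hL.map_one_eq_zero hp ?_ ?_
    · have h := hdiag true 1 1
      rwa [mul_one, (isIdempotentElem_peirceIdempotent hp true).eq] at h
    · have h := hdiag false 1 1
      rwa [mul_one, (isIdempotentElem_peirceIdempotent hp false).eq] at h
  by_cases hjk : j = k
  swap
  · exact hL.jordanDefect_eq_zero
      (by simp only [mul_assoc, peirceIdempotent_mul_mul_of_ne hp hjk, mul_zero])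
  by_cases hli : l = i
  swap
  · rw [jordanDefect_comm]
    exact hL.jordanDefect_eq_zero
      (by simp only [mul_assoc, peirceIdempotent_mul_mul_of_ne hp hli, mul_zero])
  subst hjk hli
  obtain rfl | rfl := Bool.eq_or_eq_not j l
  · exact hdiag j x y
  have hl := (isIdempotentElem_peirceIdempotent hp l).eq
  refine hL.jordanDefect_eq_zero_off_corner hL1 (p := peirceIdempotent p l) ?_ ?_ ?_ ?_
  · simp only [← mul_assoc, hl]
  · simp only [mul_assoc, peirceIdempotent_mul_of_ne hp (Bool.not_ne_self l), mul_zero]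
  · simp only [mul_assoc, peirceIdempotent_mul_mul_of_ne hp (Bool.self_ne_not l)]
  · simp only [mul_assoc, hl]

theorem jordanDefect_eq_zero_of_faithful [IsAddTorsionFree R] (hL : IsJordanDerivableAtZero L)
    {p : R} (hp : IsIdempotentElem p)
    (hpR : ∀ c : R, (∀ x, c * x * p = 0) → c = 0)
    (hpL : ∀ c : R, (∀ x, p * x * c = 0) → c = 0)
    (hqR : ∀ c : R, (∀ x, c * x * (1 - p) = 0) → c = 0)
    (hqL : ∀ c : R, (∀ x, (1 - p) * x * c = 0) → c = 0) (a b : R) :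
    jordanDefect L a b = 0 := by
  have hfaithR : ∀ i, ∀ c : R, (∀ x, c * x * peirceIdempotent p i = 0) → c = 0 := by
    rintro (_ | _)
    exacts [hqR, hpR]
  have hfaithL : ∀ i, ∀ c : R, (∀ x, peirceIdempotent p i * x * c = 0) → c = 0 := by
    rintro (_ | _)
    exacts [hqL, hpL]
  rw [← sum_peirceIdempotent_mul_mul_peirceIdempotent p a,
    ← sum_peirceIdempotent_mul_mul_peirceIdempotent p b]
  simp only [map_sum, AddMonoidHom.finsetSum_apply,
    hL.jordanDefect_peirceIdempotent_eq_zero hp hfaithR hfaithL, Finset.sum_const_zero]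

end IsJordanDerivableAtZero

lemma map_mul_self_of_jordanDefect_eq_zero [IsAddTorsionFree R] {a : R}
    (h : jordanDefect L a a = 0) : L (a * a) = L a * a + a * L a := by
  rw [jordanDefect_apply, sub_eq_zero, map_add] at h
  rw [← nsmul_right_inj two_ne_zero, two_nsmul, two_nsmul, h]
  abel

end JordanDefect

open Module.End

lemma Submodule.commute_starProjection {𝕜 E : Type*} [RCLike 𝕜] [NormedAddCommGroup E]
    [InnerProductSpace 𝕜 E] [CompleteSpace E] {K : Submodule 𝕜 E} [K.HasOrthogonalProjection]
    {T : E →L[𝕜] E} (hT : K ∈ invtSubmodule T)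
    (hT' : K ∈ invtSubmodule (star T : E →L[𝕜] E)) : Commute K.starProjection T := by
  refine (ContinuousLinearMap.IsIdempotentElem.commute_iff
    K.isIdempotentElem_starProjection).2 ⟨?_, ?_⟩
  · rwa [range_starProjection]
  · rwa [ker_starProjection, ← ContinuousLinearMap.mem_invtSubmodule_adjoint_iff,
      ← ContinuousLinearMap.star_eq_adjoint]

lemma Submodule.topologicalClosure_span_mem_invtSubmodule {𝕜 E : Type*} [RCLike 𝕜]
    [NormedAddCommGroup E] [InnerProductSpace 𝕜 E] {T : E →L[𝕜] E} {s : Set E}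
    (hT : Set.MapsTo T s s) : (span 𝕜 s).topologicalClosure ∈ invtSubmodule T := by
  refine topologicalClosure_mem_invtSubmodule ?_
  rw [mem_invtSubmodule, span_le]
  exact fun y hy ↦ subset_span (hT hy)

namespace VonNeumannAlgebra

variable {M : VonNeumannAlgebra H}

lemma isCentralProjection_starProjection {K : Submodule ℂ H} [K.HasOrthogonalProjection]
    (hM : ∀ T ∈ M, K ∈ invtSubmodule T) (hM' : ∀ T ∈ M.commutant, K ∈ invtSubmodule T) :
    M.IsCentralProjection K.starProjection := by
  have hmem : K.starProjection ∈ M := by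
    rw [← M.commutant_commutant, mem_commutant_iff]
    exact fun T hT ↦ (Submodule.commute_starProjection (hM' T hT) (hM' _ (star_mem hT))).eq.symm
  refine ⟨⟨hmem, fun A hA ↦ ?_⟩, K.isIdempotentElem_starProjection,
    (isSelfAdjoint_starProjection K).star_eq⟩
  exact (Submodule.commute_starProjection (hM A hA) (hM _ (star_mem hA))).eq

lemma CarrierOne.eq_zero_of_forall_mul_mul_eq_zero {p : H →L[ℂ] H} (hpM : p ∈ M)
    (hp : M.CarrierOne p) {a : H →L[ℂ] H} (ha : ∀ x ∈ M, a * x * p = 0) : a = 0 := by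
  set S : Set H := {y | ∃ x ∈ M, ∃ h, (x * p) h = y}
  set K := (Submodule.span ℂ S).topologicalClosure
  have hQ : M.IsCentralProjection K.starProjection := by
    refine isCentralProjection_starProjection
      (fun T hT ↦ Submodule.topologicalClosure_span_mem_invtSubmodule ?_)
      (fun T hT ↦ Submodule.topologicalClosure_span_mem_invtSubmodule ?_)
    · rintro _ ⟨x, hx, h, rfl⟩
      exact ⟨T * x, mul_mem hT hx, h, rfl⟩
    · rintro _ ⟨x, hx, h, rfl⟩
      refine ⟨x, hx, T h, ?_⟩
      have hTx := (mem_commutant_iff.1 hT x hx).symm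
      have hTp := (mem_commutant_iff.1 hT p hpM).symm
      simp only [← mul_apply_eq_comp, ← mul_assoc, hTx]
      simp only [mul_assoc, hTp]
  have hQp : K.starProjection * p = p := by
    ext h
    exact Submodule.starProjection_eq_self_iff.2 (Submodule.le_topologicalClosure _
      (Submodule.subset_span ⟨1, one_mem M, h, by simp⟩))
  have hK : K = ⊤ := by
    rw [← Submodule.range_starProjection K, hp _ hQ hQp]
    exact LinearMap.range_id
  refine ContinuousLinearMap.ext_on (s := S) ?_ ?_
  · exact Submodule.dense_iff_topologicalClosure_eq_top.2 hK
  · rintro _ ⟨x, hx, h, rfl⟩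
    simpa [mul_assoc] using congrArg (· h) (ha x hx)

lemma IsProjection.one_sub {p : H →L[ℂ] H} (hp : M.IsProjection p) : M.IsProjection (1 - p) :=
  ⟨sub_mem (one_mem M) hp.1, IsIdempotentElem.one_sub hp.2.1,
    by rw [star_sub, star_one, hp.2.2]⟩

lemma IsCentralProjection.one_sub {Q : H →L[ℂ] H} (hQ : M.IsCentralProjection Q) :
    M.IsCentralProjection (1 - Q) :=
  ⟨⟨sub_mem (one_mem M) hQ.1.1,
      fun A hA ↦ by rw [sub_mul, mul_sub, one_mul, mul_one, hQ.1.2 A hA]⟩,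
    IsIdempotentElem.one_sub hQ.2.1, by rw [star_sub, star_one, hQ.2.2]⟩

lemma CoreZero.carrierOne_one_sub {p : H →L[ℂ] H} (hp : M.CoreZero p) : M.CarrierOne (1 - p) :=
  fun Q hQ h ↦ (sub_eq_zero.1 (hp (1 - Q) hQ.one_sub
    (by linear_combination (norm := noncomm_ring) h))).symm

lemma IsProjection.faithful_of_carrierOne {p : H →L[ℂ] H} (hp : M.IsProjection p)
    (hc : M.CarrierOne p) :
    (∀ c : M, (∀ x : M, c * x * ⟨p, hp.1⟩ = 0) → c = 0) ∧
      (∀ c : M, (∀ x : M, (⟨p, hp.1⟩ : M) * x * c = 0) → c = 0) := by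
  have hright : ∀ c : M, (∀ x : M, c * x * ⟨p, hp.1⟩ = 0) → c = 0 := fun c hc' ↦
    Subtype.ext <| hc.eq_zero_of_forall_mul_mul_eq_zero hp.1 fun x hx ↦
      congrArg Subtype.val (hc' ⟨x, hx⟩)
  refine ⟨hright, fun c hc' ↦ star_eq_zero.1 (hright _ fun x ↦ ?_)⟩
  have hps : star (⟨p, hp.1⟩ : M) = ⟨p, hp.1⟩ := Subtype.ext hp.2.2
  simpa [mul_assoc, hps] using congrArg star (hc' (star x))

end VonNeumannAlgebra

theorem neg_one_case_jordan_derivation (M : VonNeumannAlgebra H) (hM : M.NoTypeI1)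
    (L : (H →L[ℂ] H) → (H →L[ℂ] H))
    (hmaps : ∀ A ∈ M, L A ∈ M)
    (hadd : ∀ A ∈ M, ∀ B ∈ M, L (A + B) = L A + L B)
    (hcond : ∀ A ∈ M, ∀ B ∈ M, A * B = 0 →
      L (A * B + B * A) = L A * B + A * L B + L B * A + B * L A) :
    ∀ A ∈ M, L (A * A) = L A * A + A * L A := by
  obtain ⟨P, hP, hcore, hcar⟩ := hM
  let L' : M →+ M :=
    .mk' (fun A ↦ ⟨L A, hmaps A A.2⟩) fun A B ↦ Subtype.ext (hadd A A.2 B B.2)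
  have hL' : IsJordanDerivableAtZero L' := fun A B h ↦
    Subtype.ext (hcond A A.2 B B.2 (congrArg Subtype.val h))
  have : IsAddTorsionFree (H →L[ℂ] H) := .of_isTorsionFree ℂ _
  have : IsAddTorsionFree M := Subtype.val_injective.isAddTorsionFree (AddSubmonoidClass.subtype M)
  obtain ⟨hpR, hpL⟩ := hP.faithful_of_carrierOne hcar
  obtain ⟨hqR, hqL⟩ := hP.one_sub.faithful_of_carrierOne hcore.carrierOne_one_sub
  have hD := hL'.jordanDefect_eq_zero_of_faithful (p := ⟨P, hP.1⟩) (Subtype.ext hP.2.1)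
    hpR hpL hqR hqL
  intro A hA
  exact congrArg Subtype.val (map_mul_self_of_jordanDefect_eq_zero (hD ⟨A, hA⟩ ⟨A, hA⟩))
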